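/- arXiv:1407.4638 — 5 statements merged into one kernel-verified Lean document; each statement's English description precedes it below -/
import Mathlib

section
/- Let λ ∈ ℂ \ {0} and f_λ(z) = λe^z. Suppose 0 < R₁ < R₂ and 0 < R₃ < R₄ satisfy R₂ > max{2R₁, R₁ + 16π, 3·log(R₄/|λ|)} and R₃ > |λ|. Let S₁ = H(R₁, R₂), S₂ = H(R₃, R₄), and let D be the union of all connected components of f_λ⁻¹(S₂) which are contained in S₁. Then dens(D, S₁) ≥ (1/(2πR₂))·log(R₄/R₃). -/
open Filter Topology Metric MeasureTheory

/-- The exponential family `f_λ(z) = λ e^z`. -/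
noncomputable def expFam (lam : ℂ) : ℂ → ℂ := fun z => lam * Complex.exp z

/-- The closed half-annulus `H(r₁, r₂) = {z : r₁ ≤ |z| ≤ r₂, Re z ≥ 0}`. -/
def halfAnnulus (r₁ r₂ : ℝ) : Set ℂ :=
  {z | r₁ ≤ ‖z‖ ∧ ‖z‖ ≤ r₂ ∧ 0 ≤ z.re}

/-- `dens(U, V) = area(U ∩ V) / area(V)`. -/
noncomputable def dens (U V : Set ℂ) : ENNReal := volume (U ∩ V) / volume V

open Set
open scoped Real

/-!
Write `a = log (R₃/|λ|)`, `b = log (R₄/|λ|)` and `θ = arg λ`. Since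
`λ e^z = |λ| e^{Re z} e^{i(Im z + θ)}`, the preimage of `H(R₃, R₄)` is the strip `a ≤ Re z ≤ b` cut
down to `cos (Im z + θ) ≥ 0`, i.e. the disjoint union of the rectangles
`[a, b] × [2πk - θ - π/2, 2πk - θ + π/2]`, each of which is a whole connected component.
With `m = √(R₂² - b²) ≥ 7R₂/8`, every rectangle whose imaginary range lies in `[R₁, m]` or
`[-m, -R₁]` sits inside `H(R₁, R₂)`. There are at least `R₂/(4π)` of them, each of area
`π log (R₄/R₃)`, while `H(R₁, R₂)` has area at most `πR₂²/2`.
-/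

lemma norm_expFam (lam z : ℂ) : ‖expFam lam z‖ = ‖lam‖ * Real.exp z.re := by
  rw [expFam, norm_mul, Complex.norm_exp]

lemma re_expFam (lam z : ℂ) :
    (expFam lam z).re = ‖lam‖ * Real.exp z.re * Real.cos (z.im + lam.arg) := by
  conv_lhs => rw [expFam, ← Complex.norm_mul_exp_arg_mul_I lam, mul_assoc, ← Complex.exp_add]
  simp [Complex.exp_re, add_comm, mul_assoc]

def cosStrip (a b θ : ℝ) : Set ℂ := {z | z.re ∈ Icc a b ∧ 0 ≤ Real.cos (z.im + θ)}

-- For `a ≤ b`, these are the connected components of `cosStrip a b θ`.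
def cosStripPiece (a b θ : ℝ) (k : ℤ) : Set ℂ :=
  Icc a b ×ℂ Icc (2 * π * k - θ - π / 2) (2 * π * k - θ + π / 2)

lemma preimage_expFam_halfAnnulus {lam : ℂ} (hlam : lam ≠ 0) {r₃ r₄ : ℝ} (hr₃ : 0 < r₃)
    (hr₄ : 0 < r₄) :
    expFam lam ⁻¹' halfAnnulus r₃ r₄ =
      cosStrip (Real.log (r₃ / ‖lam‖)) (Real.log (r₄ / ‖lam‖)) lam.arg := by
  have hA : 0 < ‖lam‖ := norm_pos_iff.mpr hlam
  ext z
  have hE : 0 < ‖lam‖ * Real.exp z.re := by positivity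
  simp only [mem_preimage, halfAnnulus, cosStrip, mem_ofPred_eq, mem_Icc, norm_expFam,
    re_expFam, mul_nonneg_iff_of_pos_left hE,
    Real.log_le_iff_le_exp (div_pos hr₃ hA), Real.le_log_iff_exp_le (div_pos hr₄ hA),
    div_le_iff₀ hA, le_div_iff₀ hA, mul_comm (Real.exp z.re), and_assoc]

lemma cos_add_eq_cos_sub_two_pi_mul_sub (y θ : ℝ) (k : ℤ) :
    Real.cos (y + θ) = Real.cos (y - (2 * π * k - θ)) := by
  rw [show y + θ = y - (2 * π * k - θ) + k * (2 * π) by ring, Real.cos_add_int_mul_two_pi]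

lemma cosStripPiece_subset_cosStrip (a b θ : ℝ) (k : ℤ) :
    cosStripPiece a b θ k ⊆ cosStrip a b θ := by
  rintro z ⟨hre, hlo, hhi⟩
  refine ⟨hre, ?_⟩
  rw [cos_add_eq_cos_sub_two_pi_mul_sub z.im θ k]
  exact Real.cos_nonneg_of_mem_Icc ⟨by linarith, by linarith⟩

lemma connectedComponentIn_cosStrip_subset {a b θ : ℝ} {k : ℤ} {w : ℂ}
    (hw : w ∈ cosStripPiece a b θ k) :
    connectedComponentIn (cosStrip a b θ) w ⊆ cosStripPiece a b θ k := by
  set c := 2 * π * k - θ with hc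
  -- `cos (z.im - c) ≥ 0` rules out `π/2 < |z.im - c| < 3π/2`, so the line `|z.im - c| = 3π/4`
  -- separates the piece from the rest of the strip.
  have hdist : ∀ z ∈ cosStrip a b θ, |z.im - c| ≤ π / 2 ∨ 3 * π / 4 < |z.im - c| := by
    intro z hz
    by_contra! h
    have hcos := hz.2
    rw [cos_add_eq_cos_sub_two_pi_mul_sub z.im θ k, ← Real.cos_abs] at hcos
    linarith [Real.cos_neg_of_pi_div_two_lt_of_lt h.1 (by linarith [h.2])]
  have hcont : Continuous fun z : ℂ => |z.im - c| := by fun_prop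
  have hwu : w ∈ {z : ℂ | |z.im - c| < 3 * π / 4} := by
    obtain ⟨-, hlo, hhi⟩ := hw
    rw [mem_ofPred_eq, abs_sub_lt_iff]
    constructor <;> linarith [hc, Real.pi_pos]
  have hcomp : connectedComponentIn (cosStrip a b θ) w ⊆ {z : ℂ | |z.im - c| < 3 * π / 4} :=
    isPreconnected_connectedComponentIn.subset_left_of_subset_union
      (isOpen_lt hcont continuous_const) (isOpen_lt continuous_const hcont)
      (disjoint_left.mpr fun z (h₁ : |z.im - c| < 3 * π / 4) h₂ => lt_asymm h₁ h₂)
      (fun z hz => (hdist z (connectedComponentIn_subset _ _ hz)).imp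
        (fun h => by simp only [mem_ofPred_eq]; linarith [Real.pi_pos]) id)
      ⟨w, mem_connectedComponentIn (cosStripPiece_subset_cosStrip a b θ k hw), hwu⟩
  intro z hz
  have hzF := connectedComponentIn_subset _ _ hz
  have him : |z.im - c| ≤ π / 2 :=
    (hdist z hzF).resolve_right (not_lt.mpr (hcomp hz).le)
  rw [abs_sub_le_iff] at him
  exact ⟨hzF.1, by linarith [hc], by linarith [hc]⟩

lemma cosStripPiece_subset_setOf_connectedComponentIn_subset {a b θ : ℝ} {k : ℤ} {S : Set ℂ}
    (h : cosStripPiece a b θ k ⊆ S) :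
    cosStripPiece a b θ k ⊆
      {w | w ∈ cosStrip a b θ ∧ connectedComponentIn (cosStrip a b θ) w ⊆ S} :=
  fun _ hw => ⟨cosStripPiece_subset_cosStrip a b θ k hw,
    (connectedComponentIn_cosStrip_subset hw).trans h⟩

lemma volume_reProdIm (s t : Set ℝ) : volume (s ×ℂ t) = volume s * volume t := by
  rw [← Complex.preimage_equivRealProd_prod, ← Measure.prod_prod, ← Measure.volume_eq_prod]
  exact Complex.volume_preserving_equiv_real_prod.measure_preimage_equiv _

lemma volume_cosStripPiece (a b θ : ℝ) (k : ℤ) :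
    volume (cosStripPiece a b θ k) = ENNReal.ofReal (b - a) * ENNReal.ofReal π := by
  rw [cosStripPiece, volume_reProdIm, Real.volume_Icc, Real.volume_Icc]
  ring_nf

lemma measurableSet_cosStripPiece (a b θ : ℝ) (k : ℤ) : MeasurableSet (cosStripPiece a b θ k) :=
  (measurableSet_Icc.preimage Complex.measurable_re).inter
    (measurableSet_Icc.preimage Complex.measurable_im)

open Function in
lemma pairwise_disjoint_cosStripPiece (a b θ : ℝ) :
    Pairwise (Disjoint on (cosStripPiece a b θ)) := by
  intro i j hij
  refine disjoint_left.mpr fun z ⟨_, hi₁, hi₂⟩ ⟨_, hj₁, hj₂⟩ => hij ?_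
  have hlt : ∀ m n : ℤ, 2 * π * m - π / 2 ≤ 2 * π * n + π / 2 → m ≤ n := fun m n h => by
    have : (m : ℝ) < n + 1 := lt_of_mul_lt_mul_left (by linarith [Real.pi_pos]) Real.two_pi_pos.le
    exact Int.lt_add_one_iff.mp (by exact_mod_cast this)
  exact le_antisymm (hlt i j (by linarith)) (hlt j i (by linarith))

lemma card_mul_volume_cosStripPiece_le {a b θ : ℝ} {K : Finset ℤ} {U : Set ℂ}
    (hK : ∀ k ∈ K, cosStripPiece a b θ k ⊆ U) :
    K.card * (ENNReal.ofReal (b - a) * ENNReal.ofReal π) ≤ volume U := by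
  calc K.card * (ENNReal.ofReal (b - a) * ENNReal.ofReal π)
        = volume (⋃ k ∈ K, cosStripPiece a b θ k) := by
          rw [measure_biUnion_finset ((pairwise_disjoint_cosStripPiece a b θ).set_pairwise _)
            (fun k _ => measurableSet_cosStripPiece a b θ k)]
          simp [volume_cosStripPiece]
    _ ≤ volume U := measure_mono (iUnion₂_subset hK)

lemma two_mul_volume_closedBall_inter_re_nonneg (r : ℝ) :
    2 * volume (closedBall (0 : ℂ) r ∩ {z | 0 ≤ z.re}) = volume (closedBall (0 : ℂ) r) := by
  set s := closedBall (0 : ℂ) r ∩ {z | 0 ≤ z.re}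
  have hunion : s ∪ -s = closedBall (0 : ℂ) r := by
    ext z
    simp only [s, mem_union, mem_inter_iff, Set.mem_neg, mem_closedBall_zero_iff, norm_neg,
      mem_ofPred_eq, Complex.neg_re]
    constructor
    · rintro (h | h) <;> exact h.1
    · intro h
      rcases le_total 0 z.re with hre | hre
      exacts [Or.inl ⟨h, hre⟩, Or.inr ⟨h, neg_nonneg.mpr hre⟩]
  have hline : volume (s ∩ -s) = 0 :=
    measure_mono_null (t := {0} ×ℂ univ)
      (fun z ⟨⟨_, h₁⟩, _, h₂⟩ => ⟨le_antisymm (by simpa using h₂) h₁, trivial⟩)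
      (by rw [volume_reProdIm, Real.volume_singleton, zero_mul])
  have hmeas : MeasurableSet (-s) :=
    (measurableSet_closedBall.inter (measurableSet_le measurable_const Complex.measurable_re)).neg
  calc 2 * volume s = volume s + volume (-s) := by rw [two_mul, Measure.measure_neg]
    _ = volume (s ∪ -s) + volume (s ∩ -s) := (measure_union_add_inter s hmeas).symm
    _ = volume (closedBall (0 : ℂ) r) := by rw [hline, add_zero, hunion]

lemma volume_halfAnnulus_le (r₁ : ℝ) {r₂ : ℝ} (hr₂ : 0 ≤ r₂) :
    volume (halfAnnulus r₁ r₂) ≤ ENNReal.ofReal (π * r₂ ^ 2 / 2) := by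
  have h : 2 * volume (halfAnnulus r₁ r₂) ≤ volume (closedBall (0 : ℂ) r₂) := by
    rw [← two_mul_volume_closedBall_inter_re_nonneg]
    gcongr
    exact fun z ⟨_, h₂, h₃⟩ => ⟨mem_closedBall_zero_iff.mpr h₂, h₃⟩
  rw [Complex.volume_closedBall, ← ENNReal.ofReal_pow hr₂, ← ENNReal.ofReal_coe_nnreal,
    NNReal.coe_real_pi, ← ENNReal.ofReal_mul (by positivity)] at h
  rw [ENNReal.ofReal_div_of_pos two_pos, ENNReal.ofReal_ofNat,
    ENNReal.le_div_iff_mul_le (Or.inl two_ne_zero) (Or.inl ENNReal.ofNat_ne_top), mul_comm,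
    mul_comm π]
  exact h

lemma reProdIm_subset_halfAnnulus {a b r m R : ℝ} {t : Set ℝ} (ha : 0 ≤ a) (hr : 0 ≤ r) (hR : 0 ≤ R)
    (hbm : b ^ 2 + m ^ 2 ≤ R ^ 2) (ht : t ⊆ Icc r m ∪ Icc (-m) (-r)) :
    Icc a b ×ℂ t ⊆ halfAnnulus r R := by
  rintro z ⟨⟨hre₁, hre₂⟩, him⟩
  have him' : r ≤ |z.im| ∧ |z.im| ≤ m := by
    rcases ht him with ⟨h₁, h₂⟩ | ⟨h₁, h₂⟩
    · exact ⟨h₁.trans (le_abs_self _), abs_le.mpr ⟨by linarith, h₂⟩⟩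
    · exact ⟨by linarith [neg_abs_le z.im], abs_le.mpr ⟨h₁, by linarith⟩⟩
  refine ⟨him'.1.trans (Complex.abs_im_le_norm z), ?_, ha.trans hre₁⟩
  have hnorm : ‖z‖ ^ 2 ≤ R ^ 2 := by
    rw [Complex.sq_norm, Complex.normSq_apply]
    nlinarith [abs_mul_abs_self z.im, abs_nonneg z.im]
  exact pow_le_pow_iff_left₀ (norm_nonneg z) hR two_ne_zero |>.mp hnorm

lemma sub_sub_one_le_card_Icc_ceil_floor (x y : ℝ) :
    y - x - 1 ≤ (Finset.Icc ⌈x⌉ ⌊y⌋).card := by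
  have h : ((⌊y⌋ + 1 - ⌈x⌉ : ℤ) : ℝ) ≤ ((⌊y⌋ + 1 - ⌈x⌉).toNat : ℝ) := by
    exact_mod_cast Int.self_le_toNat _
  rw [Int.card_Icc]
  push_cast at h
  linarith [Int.sub_one_lt_floor y, Int.ceil_lt_add_one x]

-- The `k` for which the imaginary range of `cosStripPiece _ _ θ k` lies in `[x, y]`.
noncomputable def cosStripPieceIndices (θ x y : ℝ) : Finset ℤ :=
  Finset.Icc ⌈(x + π / 2 + θ) / (2 * π)⌉ ⌊(y - π / 2 + θ) / (2 * π)⌋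

lemma Icc_subset_of_mem_cosStripPieceIndices {θ x y : ℝ} {k : ℤ}
    (hk : k ∈ cosStripPieceIndices θ x y) :
    Icc (2 * π * k - θ - π / 2) (2 * π * k - θ + π / 2) ⊆ Icc x y := by
  rw [cosStripPieceIndices, Finset.mem_Icc, Int.ceil_le, Int.le_floor, div_le_iff₀ Real.two_pi_pos,
    le_div_iff₀ Real.two_pi_pos] at hk
  exact Icc_subset_Icc (by linarith) (by linarith)

lemma le_card_cosStripPieceIndices (θ x y : ℝ) :
    (y - x - 3 * π) / (2 * π) ≤ (cosStripPieceIndices θ x y).card := by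
  refine le_trans (le_of_eq ?_) (sub_sub_one_le_card_Icc_ceil_floor _ _)
  field_simp
  ring

lemma le_card_cosStripPieceIndices_union (θ : ℝ) {r m : ℝ} (hr : 0 ≤ r) :
    (m - r - 3 * π) / π ≤ (cosStripPieceIndices θ r m ∪ cosStripPieceIndices θ (-m) (-r)).card := by
  have hdisj : Disjoint (cosStripPieceIndices θ r m) (cosStripPieceIndices θ (-m) (-r)) := by
    refine Finset.disjoint_left.mpr fun k hk₁ hk₂ => ?_
    have hπ := Real.pi_pos
    have h₁ := Icc_subset_of_mem_cosStripPieceIndices hk₁ (left_mem_Icc.mpr (by linarith))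
    have h₂ := Icc_subset_of_mem_cosStripPieceIndices hk₂ (right_mem_Icc.mpr (by linarith))
    linarith [h₁.1, h₂.2]
  rw [Finset.card_union_of_disjoint hdisj, Nat.cast_add]
  have := le_card_cosStripPieceIndices θ r m
  have := le_card_cosStripPieceIndices θ (-m) (-r)
  have : (m - r - 3 * π) / π = (m - r - 3 * π) / (2 * π) + (-r - -m - 3 * π) / (2 * π) := by
    field_simp
    ring
  linarith

lemma exists_cosStripPieces_subset_halfAnnulus (θ : ℝ) {a b R₁ R₂ : ℝ} (ha : 0 ≤ a) (hab : a ≤ b)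
    (hR₁ : 0 < R₁) (h2R₁ : 2 * R₁ < R₂) (hR₁π : R₁ + 16 * π < R₂) (hbR₂ : 3 * b < R₂) :
    ∃ K : Finset ℤ, R₂ / (4 * π) ≤ K.card ∧ ∀ k ∈ K, cosStripPiece a b θ k ⊆ halfAnnulus R₁ R₂ := by
  set m := √(R₂ ^ 2 - b ^ 2)
  have hm : b ^ 2 + m ^ 2 = R₂ ^ 2 := by
    rw [Real.sq_sqrt (by nlinarith)]
    ring
  have hm_ge : 7 / 8 * R₂ ≤ m := Real.le_sqrt_of_sq_le (by nlinarith)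
  refine ⟨cosStripPieceIndices θ R₁ m ∪ cosStripPieceIndices θ (-m) (-R₁), ?_, fun k hk => ?_⟩
  · calc R₂ / (4 * π) ≤ 4 * (m - R₁ - 3 * π) / (4 * π) := by gcongr; linarith
      _ = (m - R₁ - 3 * π) / π := mul_div_mul_left _ _ four_ne_zero
      _ ≤ _ := le_card_cosStripPieceIndices_union θ hR₁.le
  · refine reProdIm_subset_halfAnnulus ha hR₁.le (by linarith) hm.le ?_
    rcases Finset.mem_union.mp hk with hk | hk
    exacts [(Icc_subset_of_mem_cosStripPieceIndices hk).trans subset_union_left,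
      (Icc_subset_of_mem_cosStripPieceIndices hk).trans subset_union_right]

lemma ofReal_le_card_mul_div {n : ℕ} {L R : ℝ} (hL : 0 ≤ L) (hR : 0 < R)
    (hn : R / (4 * π) ≤ n) :
    ENNReal.ofReal (1 / (2 * π * R) * L) ≤
      n * (ENNReal.ofReal L * ENNReal.ofReal π) / ENNReal.ofReal (π * R ^ 2 / 2) := by
  rw [← ENNReal.ofReal_mul hL, ← ENNReal.ofReal_natCast, ← ENNReal.ofReal_mul (Nat.cast_nonneg _),
    ← ENNReal.ofReal_div_of_pos (by positivity)]
  refine ENNReal.ofReal_le_ofReal ?_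
  calc 1 / (2 * π * R) * L = R / (4 * π) * (L * π) / (π * R ^ 2 / 2) := by
        field_simp
        ring
    _ ≤ n * (L * π) / (π * R ^ 2 / 2) := by gcongr

theorem dens_preimage_halfAnnulus_general (lam : ℂ) (hlam : lam ≠ 0) (R₁ R₂ R₃ R₄ : ℝ)
    (hR₁ : 0 < R₁) (hR₃₄ : R₃ < R₄)
    (hbig : max (2 * R₁) (max (R₁ + 16 * Real.pi)
      (3 * Real.log (R₄ / ‖lam‖))) < R₂)
    (hlamR₃ : ‖lam‖ < R₃)
    (D : Set ℂ)
    (hD : D = {w | w ∈ expFam lam ⁻¹' halfAnnulus R₃ R₄ ∧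
      connectedComponentIn (expFam lam ⁻¹' halfAnnulus R₃ R₄) w ⊆ halfAnnulus R₁ R₂}) :
    ENNReal.ofReal (1 / (2 * Real.pi * R₂) * Real.log (R₄ / R₃)) ≤
      dens D (halfAnnulus R₁ R₂) := by
  obtain ⟨h2R₁, hR₁π, hbR₂⟩ :
      2 * R₁ < R₂ ∧ R₁ + 16 * π < R₂ ∧ 3 * Real.log (R₄ / ‖lam‖) < R₂ := by
    simpa only [max_lt_iff] using hbig
  have hA : 0 < ‖lam‖ := norm_pos_iff.mpr hlam
  have hR₃ : 0 < R₃ := hA.trans hlamR₃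
  have hR₄ : 0 < R₄ := hR₃.trans hR₃₄
  have ha : 0 ≤ Real.log (R₃ / ‖lam‖) := Real.log_nonneg ((one_le_div hA).mpr hlamR₃.le)
  have hba : Real.log (R₄ / ‖lam‖) - Real.log (R₃ / ‖lam‖) = Real.log (R₄ / R₃) := by
    rw [← Real.log_div (div_pos hR₄ hA).ne' (div_pos hR₃ hA).ne', div_div_div_cancel_right₀ hA.ne']
  have hL : 0 ≤ Real.log (R₄ / R₃) := Real.log_nonneg ((one_le_div hR₃).mpr hR₃₄.le)
  obtain ⟨K, hcard, hKS⟩ := exists_cosStripPieces_subset_halfAnnulus lam.arg ha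
    (by linarith) hR₁ h2R₁ hR₁π hbR₂
  have hKD : ∀ k ∈ K, cosStripPiece _ _ lam.arg k ⊆ D ∩ halfAnnulus R₁ R₂ := fun k hk => by
    rw [hD, preimage_expFam_halfAnnulus hlam hR₃ hR₄]
    exact subset_inter (cosStripPiece_subset_setOf_connectedComponentIn_subset (hKS k hk))
      (hKS k hk)
  refine (ofReal_le_card_mul_div hL (by linarith) hcard).trans ?_
  rw [dens, ← hba]
  exact ENNReal.div_le_div (card_mul_volume_cosStripPiece_le hKD)
    (volume_halfAnnulus_le R₁ (by linarith))

theorem dens_preimage_halfAnnulus (lam : ℂ) (hlam : lam ≠ 0) (R₁ R₂ R₃ R₄ : ℝ)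
    (hR₁ : 0 < R₁) (hR₁₂ : R₁ < R₂) (hR₃ : 0 < R₃) (hR₃₄ : R₃ < R₄)
    (hbig : max (2 * R₁) (max (R₁ + 16 * Real.pi)
      (3 * Real.log (R₄ / ‖lam‖))) < R₂)
    (hlamR₃ : ‖lam‖ < R₃)
    (D : Set ℂ)
    (hD : D = {w | w ∈ expFam lam ⁻¹' halfAnnulus R₃ R₄ ∧
      connectedComponentIn (expFam lam ⁻¹' halfAnnulus R₃ R₄) w ⊆ halfAnnulus R₁ R₂}) :
    ENNReal.ofReal (1 / (2 * Real.pi * R₂) * Real.log (R₄ / R₃)) ≤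
      dens D (halfAnnulus R₁ R₂) :=
  dens_preimage_halfAnnulus_general lam hlam R₁ R₂ R₃ R₄ hR₁ hR₃₄ hbig hlamR₃ D hD
end

section
/- There exist absolute constants s₀ > 0 and τ₀ > 1 (independent of λ) such that the following holds. Suppose λ ∈ ℂ \ {0}, f_λ(z) = λe^z, n ∈ ℕ, and V ⊆ ℂ is a set such that for every m with 0 ≤ m < n, the image f_λ^m(V) is contained in {z : Re(z) > log(2/|λ|)} and has Euclidean diameter less than s₀. Then the distortion of f_λⁿ on V satisfies D_V(f_λⁿ) ≤ τ₀. -/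
/-!
`|(f_λⁿ)'(z)| = |λ|ⁿ exp (∑_{m<n} Re f_λ^m(z))`, so the distortion is controlled by
`∑_{m<n} |f_λ^m(z) - f_λ^m(w)|` for `z, w ∈ V`. On the half-plane `Re w > log (2/|λ|)` one has
`|f_λ'(w)| ≥ 2`, and on pieces of diameter at most `1/4` the map `f_λ` expands distances by at least
`3/2`. Reading the orbit backwards from time `n - 1`, the distances therefore decay geometrically,
so the sum is at most `(1/4) / (1 - 2/3) = 3/4` and `D_V(f_λⁿ) ≤ e^{3/4}`.
-/

open Filter Topology Metric MeasureTheory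

/-- The distortion `D_V(g) = sup_{z ∈ V} |g'(z)| / inf_{z ∈ V} |g'(z)|`. -/
noncomputable def distortion (g : ℂ → ℂ) (V : Set ℂ) : ℝ :=
  sSup ((fun z => ‖deriv g z‖) '' V) /
    sInf ((fun z => ‖deriv g z‖) '' V)

open Finset

theorem deriv_iterate_eq_prod {𝕜 : Type*} [NontriviallyNormedField 𝕜] {f : 𝕜 → 𝕜}
    (hf : Differentiable 𝕜 f) (n : ℕ) (x : 𝕜) :
    deriv f^[n] x = ∏ m ∈ range n, deriv f (f^[m] x) := by
  induction n with
  | zero => simp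
  | succ n ih =>
    rw [Function.iterate_succ', deriv_comp _ hf.differentiableAt (hf.iterate n).differentiableAt,
      ih, prod_range_succ, mul_comm]

theorem sum_range_le_of_le_mul_succ {d : ℕ → ℝ} {n : ℕ} {c s : ℝ} (hc₀ : 0 ≤ c) (hc₁ : c < 1)
    (hs : 0 ≤ s) (hle : ∀ m < n, d m ≤ s) (hstep : ∀ m, m + 1 < n → d m ≤ c * d (m + 1)) :
    ∑ m ∈ range n, d m ≤ s / (1 - c) := by
  have hgeom : ∀ k < n, d (n - 1 - k) ≤ s * c ^ k := by
    intro k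
    induction k with
    | zero => intro hn; simpa using hle (n - 1) (by omega)
    | succ k ih =>
      intro hk
      calc d (n - 1 - (k + 1)) ≤ c * d (n - 1 - (k + 1) + 1) := hstep _ (by omega)
        _ = c * d (n - 1 - k) := by congr 2; omega
        _ ≤ c * (s * c ^ k) := by gcongr; exact ih (by omega)
        _ = s * c ^ (k + 1) := by ring
  calc ∑ m ∈ range n, d m = ∑ k ∈ range n, d (n - 1 - k) := (sum_range_reflect d n).symm
    _ ≤ ∑ k ∈ range n, s * c ^ k := sum_le_sum fun k hk => hgeom k (mem_range.mp hk)
    _ = s * ∑ k ∈ Ico 0 n, c ^ k := by rw [← mul_sum, range_eq_Ico]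
    _ ≤ s * (c ^ 0 / (1 - c)) := by gcongr; exact geom_sum_Ico_le_of_lt_one hc₀ hc₁
    _ = s / (1 - c) := by ring

theorem sSup_image_div_sInf_image_le {α : Type*} {g : α → ℝ} {V : Set α} {C : ℝ} (hC : 0 < C)
    (hg : ∀ x ∈ V, 0 ≤ g x) (hratio : ∀ z ∈ V, ∀ w ∈ V, g z ≤ C * g w) :
    sSup (g '' V) / sInf (g '' V) ≤ C := by
  rcases V.eq_empty_or_nonempty with rfl | hV
  · simpa using hC.le
  have hsup : ∀ w ∈ V, sSup (g '' V) ≤ C * g w := fun w hw =>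
    csSup_le (hV.image g) (Set.forall_mem_image.mpr fun z hz => hratio z hz w hw)
  have hsup_inf : sSup (g '' V) ≤ C * sInf (g '' V) := by
    rw [← div_le_iff₀' hC]
    exact le_csInf (hV.image g) (Set.forall_mem_image.mpr fun w hw =>
      (div_le_iff₀' hC).mpr (hsup w hw))
  exact div_le_of_le_mul₀ (Real.sInf_nonneg (Set.forall_mem_image.mpr hg)) hC.le hsup_inf

theorem three_quarters_mul_norm_le_norm_exp_sub_one {u : ℂ} (hu : ‖u‖ ≤ 1 / 4) :
    3 / 4 * ‖u‖ ≤ ‖Complex.exp u - 1‖ := by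
  have hquad := Complex.norm_exp_sub_one_sub_id_le (hu.trans (by norm_num))
  have htri : ‖u‖ ≤ ‖Complex.exp u - 1‖ + ‖Complex.exp u - 1 - u‖ := by
    simpa using norm_sub_le (Complex.exp u - 1) (Complex.exp u - 1 - u)
  nlinarith [norm_nonneg u]

theorem differentiable_expFam (lam : ℂ) : Differentiable ℂ (expFam lam) :=
  Complex.differentiable_exp.const_mul lam

theorem deriv_expFam (lam z : ℂ) : deriv (expFam lam) z = lam * Complex.exp z :=
  ((Complex.hasDerivAt_exp z).const_mul lam).deriv

theorem norm_deriv_iterate_expFam (lam : ℂ) (n : ℕ) (z : ℂ) :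
    ‖deriv (expFam lam)^[n] z‖ =
      ‖lam‖ ^ n * Real.exp (∑ m ∈ range n, ((expFam lam)^[m] z).re) := by
  simp only [deriv_iterate_eq_prod (differentiable_expFam lam), deriv_expFam, norm_prod, norm_mul,
    norm_pow, Complex.norm_exp, prod_mul_distrib, prod_const, card_range, Real.exp_sum]

theorem two_le_norm_mul_exp_re {lam w : ℂ} (hlam : lam ≠ 0)
    (hw : Real.log (2 / ‖lam‖) < w.re) : 2 ≤ ‖lam‖ * Real.exp w.re := by
  have hpos : 0 < ‖lam‖ := norm_pos_iff.mpr hlam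
  have h := Real.exp_le_exp.mpr hw.le
  rw [Real.exp_log (by positivity), div_le_iff₀ hpos] at h
  linarith

theorem three_halves_mul_norm_sub_le_norm_expFam_sub {lam z w : ℂ} (hlam : lam ≠ 0)
    (hw : Real.log (2 / ‖lam‖) < w.re) (hzw : ‖z - w‖ ≤ 1 / 4) :
    3 / 2 * ‖z - w‖ ≤ ‖expFam lam z - expFam lam w‖ := by
  have hfactor : expFam lam z - expFam lam w = lam * Complex.exp w * (Complex.exp (z - w) - 1) := by
    simp only [expFam, mul_sub, mul_assoc, ← Complex.exp_add, add_sub_cancel, mul_one]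
  rw [hfactor, norm_mul, norm_mul, Complex.norm_exp]
  calc 3 / 2 * ‖z - w‖ = 2 * (3 / 4 * ‖z - w‖) := by ring
    _ ≤ ‖lam‖ * Real.exp w.re * ‖Complex.exp (z - w) - 1‖ := by
      gcongr
      · exact two_le_norm_mul_exp_re hlam hw
      · exact three_quarters_mul_norm_le_norm_exp_sub_one hzw

section orbit

variable {lam z w : ℂ} {n : ℕ}

theorem sum_norm_iterate_expFam_sub_le (hlam : lam ≠ 0)
    (hre : ∀ m < n, Real.log (2 / ‖lam‖) < ((expFam lam)^[m] w).re)
    (hclose : ∀ m < n, ‖(expFam lam)^[m] z - (expFam lam)^[m] w‖ ≤ 1 / 4) :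
    ∑ m ∈ range n, ‖(expFam lam)^[m] z - (expFam lam)^[m] w‖ ≤ 3 / 4 := by
  have hstep : ∀ m, m + 1 < n → ‖(expFam lam)^[m] z - (expFam lam)^[m] w‖ ≤
      2 / 3 * ‖(expFam lam)^[m + 1] z - (expFam lam)^[m + 1] w‖ := by
    intro m hm
    have h := three_halves_mul_norm_sub_le_norm_expFam_sub hlam (hre m (by omega))
      (hclose m (by omega))
    rw [← Function.iterate_succ_apply' (expFam lam) m z,
      ← Function.iterate_succ_apply' (expFam lam) m w] at h
    linarith
  calc _ ≤ 1 / 4 / (1 - 2 / 3) :=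
        sum_range_le_of_le_mul_succ (by norm_num) (by norm_num) (by norm_num) hclose hstep
    _ = 3 / 4 := by norm_num

theorem norm_deriv_iterate_expFam_le (hlam : lam ≠ 0)
    (hre : ∀ m < n, Real.log (2 / ‖lam‖) < ((expFam lam)^[m] w).re)
    (hclose : ∀ m < n, ‖(expFam lam)^[m] z - (expFam lam)^[m] w‖ ≤ 1 / 4) :
    ‖deriv (expFam lam)^[n] z‖ ≤ Real.exp (3 / 4) * ‖deriv (expFam lam)^[n] w‖ := by
  have hsum : ∑ m ∈ range n, ((expFam lam)^[m] z).re ≤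
      3 / 4 + ∑ m ∈ range n, ((expFam lam)^[m] w).re := by
    have hre_le : ∀ m ∈ range n, ((expFam lam)^[m] z).re - ((expFam lam)^[m] w).re ≤
        ‖(expFam lam)^[m] z - (expFam lam)^[m] w‖ := fun m _ => by
      simpa using Complex.re_le_norm ((expFam lam)^[m] z - (expFam lam)^[m] w)
    have := (sum_le_sum hre_le).trans (sum_norm_iterate_expFam_sub_le hlam hre hclose)
    rw [sum_sub_distrib] at this
    linarith
  rw [norm_deriv_iterate_expFam, norm_deriv_iterate_expFam, mul_left_comm, ← Real.exp_add]
  gcongr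

end orbit

theorem dist_lt_of_ediam_lt {α : Type*} [PseudoMetricSpace α] {s : Set α} {r : ℝ}
    (h : ediam s < ENNReal.ofReal r) {x y : α} (hx : x ∈ s) (hy : y ∈ s) : dist x y < r :=
  edist_lt_ofReal.mp ((edist_le_ediam_of_mem hx hy).trans_lt h)

theorem exists_absolute_distortion_bound :
    ∃ s₀ τ₀ : ℝ, 0 < s₀ ∧ 1 < τ₀ ∧
      ∀ (lam : ℂ), lam ≠ 0 → ∀ (n : ℕ) (V : Set ℂ),
        (∀ m, m < n →
          (expFam lam)^[m] '' V ⊆ {z : ℂ | Real.log (2 / ‖lam‖) < z.re} ∧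
            EMetric.diam ((expFam lam)^[m] '' V) < ENNReal.ofReal s₀) →
        distortion ((expFam lam)^[n]) V ≤ τ₀ := by
  refine ⟨1 / 4, Real.exp (3 / 4), by norm_num, Real.one_lt_exp_iff.mpr (by norm_num), ?_⟩
  intro lam hlam n V hV
  have hre : ∀ w ∈ V, ∀ m < n, Real.log (2 / ‖lam‖) < ((expFam lam)^[m] w).re :=
    fun w hw m hm => (hV m hm).1 (Set.mem_image_of_mem _ hw)
  have hclose : ∀ z ∈ V, ∀ w ∈ V, ∀ m < n,
      ‖(expFam lam)^[m] z - (expFam lam)^[m] w‖ ≤ 1 / 4 := fun z hz w hw m hm => by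
    rw [← dist_eq_norm]
    exact (dist_lt_of_ediam_lt (hV m hm).2 (Set.mem_image_of_mem _ hz)
      (Set.mem_image_of_mem _ hw)).le
  exact sSup_image_div_sInf_image_le (Real.exp_pos _) (fun _ _ => norm_nonneg _)
    fun z hz w hw => norm_deriv_iterate_expFam_le hlam (hre w hw) (hclose z hz w hw)
end

section
/- Suppose that f is a transcendental entire function and that the uniformly slowly escaping set L_U(f) is non-empty. Then there exist positive constants c and r₀, and d > 1, such that for all r ≥ r₀ there exists ρ ∈ (r, dr) with m(ρ, f) ≤ c. -/
open Filter Topology Metric MeasureTheory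

/-- The uniformly slowly escaping set `L_U(f)`. -/
def uniformlySlowlyEscaping (f : ℂ → ℂ) : Set ℂ :=
  {z | ∃ (N : ℕ) (R C₁ C₂ : ℝ), 1 < R ∧ 0 < C₁ ∧ C₁ < C₂ ∧
    ∀ n, N ≤ n → C₁ * R ^ n ≤ ‖f^[n] z‖ ∧
      ‖f^[n] z‖ ≤ C₂ * R ^ n}

/-- The minimum modulus `m(r, f) = min_{|z| = r} |f(z)|`. -/
noncomputable def minMod (f : ℂ → ℂ) (r : ℝ) : ℝ :=
  sInf ((fun z => ‖f z‖) '' Metric.sphere (0 : ℂ) r)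

/-!
If `m(ρ, f) > 1` throughout an annulus, then `log |f|` is a positive harmonic function there, and
Harnack's inequality along a chain of 32 discs around a circle `|ζ| = ρ` inside it bounds
`log |f(ζ)|` by `3 ^ 32 * log |f(w)|` for any two points `ζ, w` of that circle. Since `f` is
transcendental, `|f|` exceeds `ρ ^ (2 * 3 ^ 32)` somewhere on the circle when `ρ` is large, so
`|f| > ρ ^ 2` everywhere on it. On the other hand the orbit of a point of `L_U(f)` grows by at most
a fixed factor `D` per step, so it meets every circle `|ζ| = ρ` with `2r < ρ ≤ 2Dr` at a point `w`
with `|f(w)| ≤ Dρ`, which is impossible once `ρ > D`.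
-/

open Real
open scoped Nat

theorem minMod_le_norm (f : ℂ → ℂ) (ζ : ℂ) : minMod f ‖ζ‖ ≤ ‖f ζ‖ :=
  csInf_le ⟨0, by rintro x ⟨w, -, rfl⟩; positivity⟩ ⟨ζ, by simp, rfl⟩

theorem iteratedDeriv_eq_zero_of_frequently_norm_le_pow {f : ℂ → ℂ} (hf : Differentiable ℂ f)
    {k m : ℕ} (hkm : k < m) (hbound : ∃ᶠ ρ in atTop, ∀ ζ ∈ sphere (0 : ℂ) ρ, ‖f ζ‖ ≤ ρ ^ k) :
    iteratedDeriv m f 0 = 0 := by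
  have hlim : Tendsto (fun ρ : ℝ => m ! / ρ ^ (m - k)) atTop (𝓝 0) :=
    tendsto_const_nhds.div_atTop (tendsto_pow_atTop (by omega))
  refine norm_le_zero_iff.mp (ge_of_tendsto_of_frequently hlim ?_)
  refine (hbound.and_eventually (eventually_gt_atTop 0)).mono fun ρ ⟨hρ, hρ₀⟩ => ?_
  calc ‖iteratedDeriv m f 0‖ ≤ m ! * ρ ^ k / ρ ^ m :=
        Complex.norm_iteratedDeriv_le_of_forall_mem_sphere_norm_le m hρ₀ hf.diffContOnCl hρ
    _ = m ! / ρ ^ (m - k) := by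
        rw [← Nat.add_sub_cancel' hkm.le, pow_add, Nat.add_sub_cancel_left]
        field_simp

theorem exists_polynomial_of_frequently_norm_le_pow {f : ℂ → ℂ} (hf : Differentiable ℂ f) {k : ℕ}
    (hbound : ∃ᶠ ρ in atTop, ∀ ζ ∈ sphere (0 : ℂ) ρ, ‖f ζ‖ ≤ ρ ^ k) :
    ∃ p : Polynomial ℂ, ∀ z, f z = p.eval z := by
  refine ⟨∑ m ∈ Finset.range (k + 1),
    Polynomial.C ((m ! : ℂ)⁻¹ * iteratedDeriv m f 0) * Polynomial.X ^ m, fun z => ?_⟩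
  rw [← Complex.taylorSeries_eq_of_entire' (c := 0) (z := z) hf,
    tsum_eq_sum (s := Finset.range (k + 1))]
  · simp [Polynomial.eval_finsetSum]
  · intro m hm
    rw [iteratedDeriv_eq_zero_of_frequently_norm_le_pow hf (by simpa using hm) hbound]
    simp

theorem eventually_exists_norm_gt_pow {f : ℂ → ℂ} (hf : Differentiable ℂ f)
    (htrans : ¬∃ p : Polynomial ℂ, ∀ z, f z = p.eval z) (k : ℕ) :
    ∀ᶠ ρ in atTop, ∃ ζ ∈ sphere (0 : ℂ) ρ, ρ ^ k < ‖f ζ‖ := by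
  by_contra h
  simp only [not_eventually, not_exists, not_and, not_lt] at h
  exact htrans (exists_polynomial_of_frequently_norm_le_pow hf h)

theorem InnerProductSpace.HarmonicOnNhd.harnack_lower_bound {u : ℂ → ℝ} {c w : ℂ} {R : ℝ}
    (hu : HarmonicOnNhd u (closedBall c R)) (hu₀ : ∀ z ∈ sphere c R, 0 ≤ u z)
    (hw : w ∈ ball c R) :
    (R - ‖w - c‖) / (R + ‖w - c‖) * u c ≤ u w := by
  have hR : 0 < R := pos_of_mem_ball hw
  have hcont : ContinuousOn u (sphere c |R|) :=
    hu.contDiffOn.continuousOn.mono (by rw [abs_of_pos hR]; exact sphere_subset_closedBall)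
  have hkernel : ContinuousOn (poissonKernel c w) (sphere c |R|) := by
    rw [poissonKernel_eq_re_herglotzRieszKernel]
    exact Complex.continuous_re.comp_continuousOn (continuousOn_herglotzRieszKernel_sphere hw)
  calc (R - ‖w - c‖) / (R + ‖w - c‖) * u c
      = circleAverage (((R - ‖w - c‖) / (R + ‖w - c‖)) • u) c R := by
        rw [circleAverage_smul, HarmonicOnNhd.circleAverage_eq (by rwa [abs_of_pos hR]),
          smul_eq_mul]
    _ ≤ circleAverage (poissonKernel c w • u) c R := by
        refine circleAverage_mono (hcont.const_smul _).circleIntegrable'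
          (hkernel.smul hcont).circleIntegrable' fun z hz => ?_
        rw [abs_of_pos hR] at hz
        refine mul_le_mul_of_nonneg_right ?_ (hu₀ z hz)
        rw [poissonKernel_eq_re_herglotzRieszKernel]
        exact le_re_herglotzRieszKernel hz hw
    _ = u w := hu.circleAverage_poissonKernel_smul hw

theorem log_norm_le_three_mul_log_norm {f : ℂ → ℂ} {c w : ℂ} {R : ℝ} (hR : 0 < R)
    (hf : AnalyticOnNhd ℂ f (closedBall c R)) (hf₁ : ∀ z ∈ closedBall c R, 1 ≤ ‖f z‖)
    (hw : w ∈ closedBall c (R / 2)) :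
    Real.log ‖f c‖ ≤ 3 * Real.log ‖f w‖ := by
  have hharm : InnerProductSpace.HarmonicOnNhd (fun z => Real.log ‖f z‖) (closedBall c R) :=
    fun z hz => (hf z hz).harmonicAt_log_norm (norm_pos_iff.mp (one_pos.trans_le (hf₁ z hz)))
  have hδ : ‖w - c‖ ≤ R / 2 := mem_closedBall_iff_norm.mp hw
  have hharnack := hharm.harnack_lower_bound
    (fun z hz => log_nonneg (hf₁ z (sphere_subset_closedBall hz)))
    (closedBall_subset_ball (by linarith) hw)
  have hc : 0 ≤ Real.log ‖f c‖ := log_nonneg (hf₁ c (mem_closedBall_self hR.le))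
  have hratio : 1 / 3 ≤ (R - ‖w - c‖) / (R + ‖w - c‖) := by
    rw [div_le_div_iff₀ (by norm_num) (by positivity)]
    linarith
  nlinarith

theorem le_pow_mul_of_le_mul_succ {u : ℕ → ℝ} {K : ℝ} (hK : 0 ≤ K)
    (hu : ∀ j, u j ≤ K * u (j + 1)) (n : ℕ) : u 0 ≤ K ^ n * u n := by
  induction n with
  | zero => simp
  | succ n ih =>
    calc u 0 ≤ K ^ n * u n := ih
      _ ≤ K ^ n * (K * u (n + 1)) := by gcongr; exact hu n
      _ = K ^ (n + 1) * u (n + 1) := by ring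

open Complex in
theorem exists_chain_of_norm_eq {z w : ℂ} (hzw : ‖w‖ = ‖z‖) {n : ℕ} (hn : n ≠ 0) :
    ∃ p : ℕ → ℂ, p 0 = z ∧ p n = w ∧ (∀ j, ‖p j‖ = ‖z‖) ∧
      ∀ j, dist (p (j + 1)) (p j) ≤ π * ‖z‖ / n := by
  set δ : ℝ := arg (w / z) / n
  refine ⟨fun j => z * Complex.exp (I * (j * δ : ℝ)), by simp, ?_, fun j => ?_, fun j => ?_⟩
  · rcases eq_or_ne z 0 with rfl | hz
    · simpa [eq_comm] using hzw
    have hnorm : ‖w / z‖ = 1 := by rw [norm_div, hzw, div_self (norm_ne_zero_iff.mpr hz)]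
    have harg : ((n * δ : ℝ) : ℂ) = arg (w / z) := by
      simp only [δ]; push_cast; field_simp
    have hexp := norm_mul_exp_arg_mul_I (w / z)
    rw [hnorm, ofReal_one, one_mul] at hexp
    simp only [harg, mul_comm I, hexp]
    field_simp
  · simp only [norm_mul, norm_exp_I_mul_ofReal, mul_one]
  · have hδ : ‖δ‖ ≤ π / n := by
      rw [Real.norm_eq_abs, abs_div, Nat.abs_cast]
      gcongr
      exact abs_arg_le_pi _
    calc dist (z * Complex.exp (I * ((j + 1 : ℕ) * δ : ℝ))) (z * Complex.exp (I * (j * δ : ℝ)))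
        = ‖z‖ * ‖Complex.exp (I * δ) - 1‖ := by
          have : Complex.exp (I * ((j + 1 : ℕ) * δ : ℝ)) - Complex.exp (I * (j * δ : ℝ)) =
              Complex.exp (I * (j * δ : ℝ)) * (Complex.exp (I * δ) - 1) := by
            rw [mul_sub, mul_one, ← Complex.exp_add]; push_cast; ring_nf
          rw [dist_eq_norm, ← mul_sub, this, norm_mul, norm_mul, norm_exp_I_mul_ofReal, one_mul]
      _ ≤ ‖z‖ * (π / n) := by gcongr; exact norm_exp_I_mul_ofReal_sub_one_le.trans hδ
      _ = π * ‖z‖ / n := by ring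

theorem log_norm_le_pow_mul_log_norm_of_one_le_on_annulus {f : ℂ → ℂ} {z w : ℂ} {ρ : ℝ}
    (hρ : 0 < ρ) (hf : AnalyticOnNhd ℂ f (closedBall 0 (5 * ρ / 4) \ ball 0 (3 * ρ / 4)))
    (hf₁ : ∀ ζ ∈ closedBall 0 (5 * ρ / 4) \ ball 0 (3 * ρ / 4), 1 ≤ ‖f ζ‖)
    (hz : ‖z‖ = ρ) (hw : ‖w‖ = ρ) :
    Real.log ‖f z‖ ≤ 3 ^ 32 * Real.log ‖f w‖ := by
  obtain ⟨p, hp₀, hp₃₂, hp_norm, hp_dist⟩ :=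
    exists_chain_of_norm_eq (hw.trans hz.symm) (n := 32) (by norm_num)
  have hdisc (j : ℕ) :
      closedBall (p j) (ρ / 4) ⊆ closedBall 0 (5 * ρ / 4) \ ball 0 (3 * ρ / 4) := by
    intro ζ hζ
    rw [mem_closedBall_iff_norm] at hζ
    have h₁ := norm_sub_norm_le ζ (p j)
    have h₂ := norm_sub_norm_le (p j) ζ
    rw [norm_sub_rev] at h₂
    simp only [Set.mem_sdiff, mem_closedBall_zero_iff, mem_ball_zero_iff, not_lt, hp_norm j, hz]
      at h₁ h₂ ⊢
    constructor <;> linarith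
  have hstep (j : ℕ) : Real.log ‖f (p j)‖ ≤ 3 * Real.log ‖f (p (j + 1))‖ := by
    refine log_norm_le_three_mul_log_norm (by positivity) (hf.mono (hdisc j))
      (fun ζ hζ => hf₁ ζ (hdisc j hζ)) ?_
    -- consecutive points are `π ρ / 32 ≤ ρ / 8` apart, half the radius of the discs
    rw [mem_closedBall]
    refine (hp_dist j).trans ?_
    rw [hz]
    nlinarith [pi_le_four]
  simpa [hp₀, hp₃₂] using
    le_pow_mul_of_le_mul_succ (u := fun j => Real.log ‖f (p j)‖) (by norm_num) hstep 32

theorem eventually_sq_lt_norm_of_one_le_on_annulus {f : ℂ → ℂ} (hf : Differentiable ℂ f)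
    (htrans : ¬∃ p : Polynomial ℂ, ∀ z, f z = p.eval z) :
    ∀ᶠ ρ in atTop, ∀ w : ℂ, ‖w‖ = ρ →
      (∀ ζ ∈ closedBall 0 (5 * ρ / 4) \ ball 0 (3 * ρ / 4), 1 ≤ ‖f ζ‖) → ρ ^ 2 < ‖f w‖ := by
  filter_upwards [eventually_exists_norm_gt_pow hf htrans (2 * 3 ^ 32), eventually_gt_atTop 1]
    with ρ ⟨ζ, hζ, hζ_big⟩ hρ w hw hf₁
  have hw₁ : 1 ≤ ‖f w‖ := hf₁ w
    ⟨by rw [mem_closedBall_zero_iff, hw]; linarith, by rw [mem_ball_zero_iff, hw, not_lt]; linarith⟩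
  have hharnack := log_norm_le_pow_mul_log_norm_of_one_le_on_annulus (by linarith)
    (fun ζ _ => hf.analyticAt ζ) hf₁ (mem_sphere_zero_iff_norm.mp hζ) hw
  have hlog : Real.log (ρ ^ (2 * 3 ^ 32)) < Real.log ‖f ζ‖ :=
    Real.log_lt_log (by positivity) hζ_big
  rw [← Real.log_lt_log_iff (by positivity) (by linarith), Real.log_pow]
  rw [Real.log_pow] at hlog
  push_cast at hlog ⊢
  linarith

theorem exists_norm_iterate_succ_le_of_mem_uniformlySlowlyEscaping {f : ℂ → ℂ} {z : ℂ}
    (hz : z ∈ uniformlySlowlyEscaping f) :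
    ∃ D, 1 < D ∧ ∃ N, ∀ n, N ≤ n → ‖f^[n + 1] z‖ ≤ D * ‖f^[n] z‖ := by
  obtain ⟨N, R, C₁, C₂, hR, hC₁, hC₁₂, horbit⟩ := hz
  refine ⟨C₂ * R / C₁, by rw [lt_div_iff₀ hC₁]; nlinarith, N, fun n hn => ?_⟩
  calc ‖f^[n + 1] z‖ ≤ C₂ * R ^ (n + 1) := (horbit (n + 1) (by omega)).2
    _ = C₂ * R / C₁ * (C₁ * R ^ n) := by field_simp; ring
    _ ≤ C₂ * R / C₁ * ‖f^[n] z‖ := by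
        gcongr
        · exact div_nonneg (by nlinarith) hC₁.le
        · exact (horbit n hn).1

theorem tendsto_norm_iterate_of_mem_uniformlySlowlyEscaping {f : ℂ → ℂ} {z : ℂ}
    (hz : z ∈ uniformlySlowlyEscaping f) : Tendsto (fun n => ‖f^[n] z‖) atTop atTop := by
  obtain ⟨N, R, C₁, C₂, hR, hC₁, -, horbit⟩ := hz
  refine tendsto_atTop_mono' atTop (eventually_atTop.mpr ⟨N, fun n hn => (horbit n hn).1⟩) ?_
  exact (tendsto_pow_atTop_atTop_of_one_lt hR).const_mul_atTop hC₁

theorem exists_mem_Ioc_of_le_mul {u : ℕ → ℝ} {D : ℝ} {N : ℕ} (hD : 0 ≤ D)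
    (hu : ∀ n, N ≤ n → u (n + 1) ≤ D * u n) (htend : Tendsto u atTop atTop) {r : ℝ}
    (hr : u N ≤ r) : ∃ n, N ≤ n ∧ r < u n ∧ u n ≤ D * r := by
  have hex : ∃ m, r < u (N + m) := by
    obtain ⟨m, hm⟩ := (htend.eventually_gt_atTop r).exists_forall_of_atTop
    exact ⟨m, hm _ (by omega)⟩
  have hm₀ : Nat.find hex ≠ 0 := by
    intro h
    have := Nat.find_spec hex
    rw [h, Nat.add_zero] at this
    linarith
  obtain ⟨m, hm⟩ := Nat.exists_eq_succ_of_ne_zero hm₀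
  have hprev : u (N + m) ≤ r := not_lt.mp (Nat.find_min hex (by omega))
  refine ⟨N + (m + 1), by omega, by simpa [hm] using Nat.find_spec hex, ?_⟩
  calc u (N + (m + 1)) ≤ D * u (N + m) := hu (N + m) (by omega)
    _ ≤ D * r := by gcongr

theorem minMod_small_of_uniformlySlowlyEscaping_nonempty (f : ℂ → ℂ)
    (hf : Differentiable ℂ f)
    (htrans : ¬∃ p : Polynomial ℂ, ∀ z, f z = Polynomial.eval z p)
    (hne : (uniformlySlowlyEscaping f).Nonempty) :
    ∃ c r₀ d : ℝ, 0 < c ∧ 0 < r₀ ∧ 1 < d ∧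
      ∀ r, r₀ ≤ r → ∃ ρ, r < ρ ∧ ρ < d * r ∧ minMod f ρ ≤ c := by
  obtain ⟨z, hz⟩ := hne
  obtain ⟨D, hD, N, hstep⟩ := exists_norm_iterate_succ_le_of_mem_uniformlySlowlyEscaping hz
  obtain ⟨ρ₀, hbig⟩ :=
    (eventually_sq_lt_norm_of_one_le_on_annulus hf htrans).exists_forall_of_atTop
  refine ⟨1, max (max ‖f^[N] z‖ ρ₀) D, 3 * D, one_pos, lt_max_of_lt_right (by linarith),
    by linarith, fun r hr => ?_⟩
  simp only [max_le_iff] at hr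
  by_contra! hmin
  obtain ⟨n, hn, hρ_low, hρ_up⟩ := exists_mem_Ioc_of_le_mul (by linarith) hstep
    (tendsto_norm_iterate_of_mem_uniformlySlowlyEscaping hz) (r := 2 * r) (by linarith)
  set ρ := ‖f^[n] z‖
  have hann : ∀ ζ ∈ closedBall 0 (5 * ρ / 4) \ ball 0 (3 * ρ / 4), 1 ≤ ‖f ζ‖ := by
    intro ζ ⟨hζ_le, hζ_ge⟩
    simp only [mem_closedBall_zero_iff, mem_ball_zero_iff, not_lt] at hζ_le hζ_ge
    exact (hmin ‖ζ‖ (by linarith) (by nlinarith)).le.trans (minMod_le_norm f ζ)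
  have hsq : ρ ^ 2 < ‖f (f^[n] z)‖ := hbig ρ (by linarith) _ rfl hann
  have hfw : ‖f (f^[n] z)‖ ≤ D * ρ := by
    rw [← Function.iterate_succ_apply' f n z]
    exact hstep n hn
  nlinarith
end

section
/- Suppose (t_n)_{n ≥ 0} is a sequence of positive integers such that t_n / (∑_{k=1}^{n-1} t_k) → 0 as n → ∞. Then log t_n = o(n) as n → ∞. -/
open Filter Topology Finset

/-!
With `S n = ∑ k ∈ Ico 1 n, t k` we have `S (n + 1) / S n = 1 + t n / S n → 1`, so the increments
`log S (n + 1) - log S n` tend to `0` and, by Cesàro, `log S n / n → 0`. Since `1 ≤ t n` and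
eventually `t n ≤ S n`, `log t n / n` is squeezed between `0` and `log S n / n`.
-/

theorem tendsto_div_natCast_of_tendsto_sub {u : ℕ → ℝ} {l : ℝ}
    (h : Tendsto (fun n => u (n + 1) - u n) atTop (𝓝 l)) :
    Tendsto (fun n => u n / n) atTop (𝓝 l) := by
  have hsum : Tendsto (fun n : ℕ => (n⁻¹ : ℝ) * (u n - u 0) + u 0 / n) atTop (𝓝 (l + 0)) := by
    refine Tendsto.add ?_ (tendsto_const_div_atTop_nhds_zero_nat (u 0))
    simpa only [sum_range_sub] using h.cesaro
  rw [add_zero] at hsum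
  refine hsum.congr fun n => ?_
  ring

theorem tendsto_log_div_natCast_of_tendsto_ratio {S : ℕ → ℝ} (hS : ∀ᶠ n in atTop, 0 < S n)
    (h : Tendsto (fun n => S (n + 1) / S n) atTop (𝓝 1)) :
    Tendsto (fun n => Real.log (S n) / n) atTop (𝓝 0) := by
  refine tendsto_div_natCast_of_tendsto_sub ?_
  have hlog := (Real.continuousAt_log one_ne_zero).tendsto.comp h
  rw [Real.log_one] at hlog
  refine hlog.congr' ?_
  filter_upwards [hS, tendsto_add_atTop_nat 1 |>.eventually hS] with n hn hn1
  exact Real.log_div hn1.ne' hn.ne'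

theorem log_isLittleO_of_slowlyGrowing (t : ℕ → ℕ) (hpos : ∀ n, 0 < t n)
    (hslow : Tendsto (fun n => (t n : ℝ) / ∑ k ∈ Finset.Ico 1 n, (t k : ℝ))
      atTop (nhds 0)) :
    Tendsto (fun n => Real.log (t n) / (n : ℝ)) atTop (nhds 0) := by
  set S : ℕ → ℝ := fun n => ∑ k ∈ Ico 1 n, (t k : ℝ)
  have hS : ∀ᶠ n in atTop, 0 < S n := by
    filter_upwards [eventually_ge_atTop 2] with n hn
    exact sum_pos (fun k _ => Nat.cast_pos.mpr (hpos k)) ⟨1, mem_Ico.mpr ⟨le_rfl, hn⟩⟩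
  have hratio : Tendsto (fun n => S (n + 1) / S n) atTop (𝓝 1) := by
    have h1 := hslow.const_add 1
    rw [add_zero] at h1
    refine h1.congr' ?_
    filter_upwards [hS, eventually_ge_atTop 1] with n hn hn1
    rw [show S (n + 1) = S n + t n from sum_Ico_succ_top hn1 _, add_div, div_self hn.ne']
  have hle : ∀ᶠ n in atTop, (t n : ℝ) ≤ S n := by
    filter_upwards [hS, hslow.eventually (gt_mem_nhds one_pos)] with n hn hlt
    exact ((div_lt_one hn).mp hlt).le
  refine tendsto_of_tendsto_of_tendsto_of_le_of_le' tendsto_const_nhds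
    (tendsto_log_div_natCast_of_tendsto_ratio hS hratio) ?_ ?_
  · exact Eventually.of_forall fun n => div_nonneg (Real.log_natCast_nonneg _) n.cast_nonneg
  · filter_upwards [hle] with n hn
    gcongr
    · exact Nat.cast_pos.mpr (hpos n)
end

section
/- Define the sequence (t_n) of positive integers by t_n = 2^{m²} for (m−1)³ ≤ n < m³, m ∈ ℕ. Then log t_n = o(n) as n → ∞, but it is NOT the case that t_n / (∑_{k=1}^{n-1} t_k) → 0 as n → ∞. -/
/-!
Write `r = ⌊n ^ (1 / 3)⌋`, so that `t n = 2 ^ (r + 1) ^ 2` and `r ^ 3 ≤ n`; hence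
`log t n / n ≤ 4 log 2 / r → 0`. At `n = r ^ 3` each earlier term is at most `2 ^ r ^ 2` and there
are fewer than `r ^ 3` of them, while `r ^ 3 * 2 ^ r ^ 2 ≤ 2 ^ (r + 1) ^ 2 = t n`; so along the
cubes the ratio of `t n` to the preceding sum stays at least `1`.
-/

open Filter Topology

namespace Nat

lemma tendsto_nthRoot_atTop {k : ℕ} (hk : k ≠ 0) : Tendsto (nthRoot k) atTop atTop :=
  tendsto_atTop_atTop.2 fun b => ⟨b ^ k, fun _ hn => (le_nthRoot_iff hk).2 hn⟩

lemma pow_three_le_two_mul_four_pow (r : ℕ) : r ^ 3 ≤ 2 * 4 ^ r := by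
  induction r with
  | zero => norm_num
  | succ r ih =>
    rcases Nat.lt_or_ge r 2 with hr | hr
    · interval_cases r <;> norm_num
    · have hr3 : 2 * r ^ 2 ≤ r ^ 3 := by nlinarith
      have hr2 : 2 * r ≤ r ^ 2 := by nlinarith
      calc (r + 1) ^ 3 ≤ 4 * r ^ 3 := by nlinarith
        _ ≤ 4 * (2 * 4 ^ r) := Nat.mul_le_mul_left 4 ih
        _ = 2 * 4 ^ (r + 1) := by ring

lemma pow_three_mul_two_pow_sq_le (r : ℕ) : r ^ 3 * 2 ^ r ^ 2 ≤ 2 ^ (r + 1) ^ 2 :=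
  calc r ^ 3 * 2 ^ r ^ 2 ≤ 2 * 4 ^ r * 2 ^ r ^ 2 :=
        Nat.mul_le_mul_right _ (pow_three_le_two_mul_four_pow r)
    _ = 2 ^ (r + 1) ^ 2 := by
        rw [show (r + 1) ^ 2 = 1 + 2 * r + r ^ 2 by ring, pow_add, pow_add, pow_mul]
        norm_num

end Nat

def cubeBlockSeq (n : ℕ) : ℕ := 2 ^ (Nat.nthRoot 3 n + 1) ^ 2

lemma eq_cubeBlockSeq {t : ℕ → ℕ}
    (ht : ∀ m : ℕ, 1 ≤ m → ∀ n : ℕ, (m - 1) ^ 3 ≤ n → n < m ^ 3 → t n = 2 ^ (m ^ 2)) :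
    t = cubeBlockSeq := funext fun n =>
  ht _ le_add_self n (Nat.pow_nthRoot_le (.inl three_ne_zero))
    (Nat.lt_pow_nthRoot_add_one three_ne_zero n)

lemma cubeBlockSeq_pow_three (r : ℕ) : cubeBlockSeq (r ^ 3) = 2 ^ (r + 1) ^ 2 := by
  rw [cubeBlockSeq, Nat.nthRoot_pow three_ne_zero]

lemma log_cubeBlockSeq (n : ℕ) :
    Real.log (cubeBlockSeq n) = (Nat.nthRoot 3 n + 1) ^ 2 * Real.log 2 := by
  rw [cubeBlockSeq, Nat.cast_pow, Real.log_pow]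
  push_cast
  ring

lemma log_cubeBlockSeq_div_le {n : ℕ} (hn : 1 ≤ Nat.nthRoot 3 n) :
    Real.log (cubeBlockSeq n) / n ≤ 4 * Real.log 2 / Nat.nthRoot 3 n := by
  set r := Nat.nthRoot 3 n
  have hcube : r ^ 3 ≤ n := Nat.pow_nthRoot_le (.inl three_ne_zero)
  have hbound : (r + 1) ^ 2 * r ≤ 4 * n :=
    calc (r + 1) ^ 2 * r ≤ (2 * r) ^ 2 * r :=
          Nat.mul_le_mul_right r (Nat.pow_le_pow_left (by omega) 2)
      _ = 4 * r ^ 3 := by ring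
      _ ≤ 4 * n := Nat.mul_le_mul_left 4 hcube
  have hn' : (0 : ℝ) < n := by exact_mod_cast (Nat.one_le_pow _ _ hn).trans hcube
  rw [log_cubeBlockSeq, div_le_div_iff₀ hn' (by exact_mod_cast hn)]
  have : ((r + 1) ^ 2 * r : ℝ) ≤ 4 * n := by exact_mod_cast hbound
  nlinarith [Real.log_pos (one_lt_two : (1 : ℝ) < 2)]

theorem tendsto_log_cubeBlockSeq_div :
    Tendsto (fun n => Real.log (cubeBlockSeq n) / (n : ℝ)) atTop (𝓝 0) := by
  have hroot := Nat.tendsto_nthRoot_atTop three_ne_zero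
  refine tendsto_of_tendsto_of_tendsto_of_le_of_le' tendsto_const_nhds
    ((tendsto_const_div_atTop_nhds_zero_nat (4 * Real.log 2)).comp hroot)
    (Eventually.of_forall fun n => by rw [log_cubeBlockSeq]; positivity) ?_
  filter_upwards [hroot.eventually_ge_atTop 1] with n hn using log_cubeBlockSeq_div_le hn

lemma sum_cubeBlockSeq_le (r : ℕ) :
    ∑ k ∈ Finset.Ico 1 (r ^ 3), cubeBlockSeq k ≤ cubeBlockSeq (r ^ 3) := by
  have hterm : ∀ k ∈ Finset.Ico 1 (r ^ 3), cubeBlockSeq k ≤ 2 ^ r ^ 2 := fun k hk => by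
    have : Nat.nthRoot 3 k < r := (Nat.nthRoot_lt_iff three_ne_zero).2 (Finset.mem_Ico.1 hk).2
    exact Nat.pow_le_pow_right two_pos (Nat.pow_le_pow_left this 2)
  calc ∑ k ∈ Finset.Ico 1 (r ^ 3), cubeBlockSeq k
      ≤ (Finset.Ico 1 (r ^ 3)).card * 2 ^ r ^ 2 := Finset.sum_le_card_nsmul _ _ _ hterm
    _ ≤ r ^ 3 * 2 ^ r ^ 2 := by rw [Nat.card_Ico]; exact Nat.mul_le_mul_right _ (Nat.sub_le _ _)
    _ ≤ cubeBlockSeq (r ^ 3) := by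
        rw [cubeBlockSeq_pow_three]; exact Nat.pow_three_mul_two_pow_sq_le r

lemma one_le_cubeBlockSeq_div_sum {r : ℕ} (hr : 2 ≤ r) :
    1 ≤ (cubeBlockSeq (r ^ 3) : ℝ) / ∑ k ∈ Finset.Ico 1 (r ^ 3), (cubeBlockSeq k : ℝ) := by
  have hne : (Finset.Ico 1 (r ^ 3)).Nonempty :=
    Finset.nonempty_Ico.2 (Nat.one_lt_pow three_ne_zero hr)
  have hpos : 0 < ∑ k ∈ Finset.Ico 1 (r ^ 3), cubeBlockSeq k :=
    Finset.sum_pos (fun _ _ => pow_pos two_pos _) hne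
  rw [← Nat.cast_sum, one_le_div (by exact_mod_cast hpos)]
  exact_mod_cast sum_cubeBlockSeq_le r

theorem not_tendsto_cubeBlockSeq_div_sum :
    ¬ Tendsto (fun n => (cubeBlockSeq n : ℝ) / ∑ k ∈ Finset.Ico 1 n, (cubeBlockSeq k : ℝ))
      atTop (𝓝 0) := fun h =>
  absurd (ge_of_tendsto (h.comp (tendsto_pow_atTop three_ne_zero))
    ((eventually_ge_atTop 2).mono fun _ => one_le_cubeBlockSeq_div_sum)) (by norm_num)

theorem counterexample_littleO_not_slowlyGrowing (t : ℕ → ℕ)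
    (ht : ∀ m : ℕ, 1 ≤ m → ∀ n : ℕ, (m - 1) ^ 3 ≤ n → n < m ^ 3 → t n = 2 ^ (m ^ 2)) :
    Tendsto (fun n => Real.log (t n) / (n : ℝ)) atTop (nhds 0) ∧
      ¬ Tendsto (fun n => (t n : ℝ) / ∑ k ∈ Finset.Ico 1 n, (t k : ℝ))
        atTop (nhds 0) := by
  obtain rfl := eq_cubeBlockSeq ht
  exact ⟨tendsto_log_cubeBlockSeq_div, not_tendsto_cubeBlockSeq_div_sum⟩
end
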